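/- With ρ and ρ̄ as above, two nonempty words u, v over {A,B} satisfy u = v if and only if ρ(u) + ρ̄(v) = 1. -/

import Mathlib

/-!
`rho θ w` is the binary expansion `0.θ(x₁)…θ(xₗ)1`. With `{0,1}`-valued digits its first digit
is read off from which side of `1/2` it lies on, and the empty word sits exactly at `1/2`, so
`rho θ` is injective. For complementary digits `θ + θbar = 1` the two expansions of the same word
add up to `∑ 2^{-i} + 2 · 2^{-(l+1)} = 1`. Hence `rho θ u + rho θbar v = 1 = rho θ v + rho θbar v`
forces `u = v`.
-/

/-- The end-marked binary encoding of a word over a two-element alphabet. -/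
noncomputable def rho (θ : Bool → ℝ) (w : List Bool) : ℝ :=
  (∑ i : Fin w.length, θ (w.get i) * (1 / 2 : ℝ) ^ (i.val + 1)) + (1 / 2 : ℝ) ^ (w.length + 1)

@[simp]
lemma rho_nil (θ : Bool → ℝ) : rho θ [] = 1 / 2 := by
  simp [rho]

lemma rho_cons (θ : Bool → ℝ) (x : Bool) (w : List Bool) :
    rho θ (x :: w) = θ x / 2 + rho θ w / 2 := by
  simp only [rho, List.length_cons, Fin.sum_univ_succ, Fin.val_zero, Fin.val_succ,
    List.get_cons_succ', List.get_cons_zero, pow_succ, add_div, Finset.sum_div]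
  ring_nf

section

variable {θ : Bool → ℝ}

lemma rho_pos (hθ : ∀ x, 0 ≤ θ x) (w : List Bool) : 0 < rho θ w := by
  induction w with
  | nil => norm_num
  | cons x w ih => linarith [rho_cons θ x w, hθ x]

lemma rho_lt_one (hθ : ∀ x, θ x ≤ 1) (w : List Bool) : rho θ w < 1 := by
  induction w with
  | nil => norm_num
  | cons x w ih => linarith [rho_cons θ x w, hθ x]

lemma rho_cons_mem_Ioo (hθ : ∀ x, 0 ≤ θ x ∧ θ x ≤ 1) (x : Bool) (w : List Bool) :
    rho θ (x :: w) ∈ Set.Ioo (θ x / 2) (θ x / 2 + 1 / 2) := by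
  have hpos := rho_pos (fun y => (hθ y).1) w
  have hlt := rho_lt_one (fun y => (hθ y).2) w
  constructor <;> linarith [rho_cons θ x w]

lemma rho_cons_ne_rho_nil (hθ : ∀ x, θ x = 0 ∨ θ x = 1) (x : Bool) (w : List Bool) :
    rho θ (x :: w) ≠ rho θ [] := by
  have hθ_mem (y : Bool) : 0 ≤ θ y ∧ θ y ≤ 1 := by rcases hθ y with h | h <;> simp [h]
  obtain ⟨hlo, hhi⟩ := rho_cons_mem_Ioo hθ_mem x w
  rw [rho_nil]
  intro h
  rcases hθ x with hx | hx <;> linarith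

lemma rho_injective (hθ : ∀ x, θ x = 0 ∨ θ x = 1) (hinj : θ true ≠ θ false) :
    Function.Injective (rho θ) := by
  have hθ_mem (y : Bool) : 0 ≤ θ y ∧ θ y ≤ 1 := by rcases hθ y with h | h <;> simp [h]
  have hθ_inj : Function.Injective θ := by
    intro a b h
    cases a <;> cases b <;> simp_all [eq_comm]
  intro u v h
  induction u generalizing v with
  | nil =>
    cases v with
    | nil => rfl
    | cons y v => exact absurd h.symm (rho_cons_ne_rho_nil hθ y v)
  | cons x u ih =>
    cases v with
    | nil => exact absurd h (rho_cons_ne_rho_nil hθ x u)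
    | cons y v =>
      have hxy : x = y := by
        obtain ⟨hxlo, hxhi⟩ := rho_cons_mem_Ioo hθ_mem x u
        obtain ⟨hylo, hyhi⟩ := rho_cons_mem_Ioo hθ_mem y v
        apply hθ_inj
        rcases hθ x with hx | hx <;> rcases hθ y with hy | hy <;> linarith
      subst hxy
      exact congrArg _ (ih (by linarith [rho_cons θ x u, rho_cons θ x v]))

end

lemma rho_add_rho_of_add_eq_one {θ θbar : Bool → ℝ} (hsum : ∀ x, θ x + θbar x = 1)
    (w : List Bool) : rho θ w + rho θbar w = 1 := by
  induction w with
  | nil => norm_num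
  | cons x w ih => linarith [rho_cons θ x w, rho_cons θbar x w, hsum x]

theorem stmt_4_general (θ θbar : Bool → ℝ)
    (hθ : ∀ x, θ x = 0 ∨ θ x = 1)
    (hsum : ∀ x, θ x + θbar x = 1) (hinj : θ true ≠ θ false)
    (u v : List Bool) :
    u = v ↔ rho θ u + rho θbar v = 1 := by
  constructor
  · rintro rfl
    exact rho_add_rho_of_add_eq_one hsum u
  · intro h
    exact rho_injective hθ hinj (by linarith [rho_add_rho_of_add_eq_one hsum v])

theorem stmt_4 (θ θbar : Bool → ℝ)
    (hθ : ∀ x, θ x = 0 ∨ θ x = 1) (hθbar : ∀ x, θbar x = 0 ∨ θbar x = 1)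
    (hsum : ∀ x, θ x + θbar x = 1) (hinj : θ true ≠ θ false)
    (u v : List Bool) (hu : u ≠ []) (hv : v ≠ []) :
    u = v ↔ rho θ u + rho θbar v = 1 :=
  stmt_4_general θ θbar hθ hsum hinj u v
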